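/- Let $G$ be the triangle digraph with vertices $\{0, 1, 2\}$ and edges $\{(0,1), (1,2), (0,2)\}$, and let $f, g : \{0,1,2\} \to \mathbb{R}^\times$ be non-vanishing functions. Then the $(f,g)$-weighted R-torsion of $G$ equals $T(G, f, g) = \left( \sum_{i=0}^2 \frac{f(i)^2}{g(i)^2} \right)^{1/2}$. In particular, $T(G, f, f) = \sqrt{3}$ for every non-vanishing $f$. -/

import Mathlib

open LinearMap Module

/-- The Hodge-Laplace operator `Δₙ = ∂ₙ* ∂ₙ + ∂ₙ₊₁ ∂ₙ₊₁*`. -/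
noncomputable def hodgeLaplace (C : ℕ → Type) [∀ n, NormedAddCommGroup (C n)]
    [∀ n, InnerProductSpace ℝ (C n)] [∀ n, FiniteDimensional ℝ (C n)]
    (d : ∀ n, C n →ₗ[ℝ] C (n - 1)) (n : ℕ) : C n →ₗ[ℝ] C n :=
  (adjoint (d n)).comp (d n) +
    (show C n →ₗ[ℝ] C n from (d (n + 1)).comp (adjoint (d (n + 1))))

/-- The product of the positive eigenvalues (with multiplicity) of a
self-adjoint positive semi-definite operator `T`, computed as
`det(T + P_{ker T})` where `P_{ker T}` is the orthogonal projection onto the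
kernel; this is the regularized determinant `exp(-ζ_T'(0))`. -/
noncomputable def detPos {E : Type} [NormedAddCommGroup E]
    [InnerProductSpace ℝ E] [FiniteDimensional ℝ E] (T : E →ₗ[ℝ] E) : ℝ :=
  LinearMap.det (T + ((LinearMap.ker T).subtypeL.comp
    ((LinearMap.ker T).orthogonalProjectionOnto)).toLinearMap)

/-- The analytic torsion of a chain complex of finite-dimensional real inner
product spaces vanishing above degree `N`:
`log T = (1/2) ∑ (-1)^n n ζₙ'(0) = -(1/2) ∑ (-1)^n n ∑_{λ>0} log λ`, i.e.
`T = ∏ₙ (det'Δₙ)^{(-1)^{n+1} n / 2}`. -/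
noncomputable def torsion (C : ℕ → Type) [∀ n, NormedAddCommGroup (C n)]
    [∀ n, InnerProductSpace ℝ (C n)] [∀ n, FiniteDimensional ℝ (C n)]
    (d : ∀ n, C n →ₗ[ℝ] C (n - 1)) (N : ℕ) : ℝ :=
  ∏ n ∈ Finset.range (N + 1),
    detPos (hodgeLaplace C d n) ^ (((-1 : ℝ) ^ (n + 1) * n) / 2)

/-- Dimensions of the `(f,g)`-weighted `∂`-invariant complex of the triangle
digraph `0 → 1 → 2`, `0 → 2`: `Ω₀ = ⟨e₀,e₁,e₂⟩`, `Ω₁ = ⟨e₀₁,e₁₂,e₀₂⟩`,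
`Ω₂ = ⟨e₀₁₂⟩`, `Ωₙ = 0` for `n ≥ 3`. -/
def triDims : ℕ → ℕ
  | 0 => 3
  | 1 => 3
  | 2 => 1
  | _ => 0

/-- The `(f,g)`-weighted boundary operators of the triangle digraph, written in
the `ι_g`-orthonormal bases `e_{v₀⋯vₙ}/(g(v₀)⋯g(vₙ))` (basis order
`e₀,e₁,e₂`; `e₀₁,e₁₂,e₀₂`; `e₀₁₂`), where `∂^f` deletes the `i`-th vertex with
factor `(-1)^i f(vᵢ)`. -/
noncomputable def triBoundary (f g : Fin 3 → ℝ) :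
    ∀ n, EuclideanSpace ℝ (Fin (triDims n)) →ₗ[ℝ]
      EuclideanSpace ℝ (Fin (triDims (n - 1)))
  | 0 => 0
  | 1 => Matrix.toEuclideanLin
      !![-(f 1 / g 1), 0, -(f 2 / g 2);
         f 0 / g 0, -(f 2 / g 2), 0;
         0, f 1 / g 1, f 0 / g 0]
  | 2 => Matrix.toEuclideanLin !![f 2 / g 2; f 0 / g 0; -(f 1 / g 1)]
  | (_ + 3) => 0

/-!
Both nonzero Hodge Laplacians are scalar: with `s = ∑ᵢ (f i / g i)²`, a direct matrix computation
gives `Δ₁ = s • id` on the three-dimensional `Ω₁` and `Δ₂ = s • id` on the line `Ω₂`, while `Δ₀`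
enters the torsion with exponent `0`. Hence `T = (s³)^{1/2} · s⁻¹ = √s`.
-/

open Matrix

lemma detPos_eq_det_of_ker_eq_bot {E : Type} [NormedAddCommGroup E] [InnerProductSpace ℝ E]
    [FiniteDimensional ℝ E] {T : E →ₗ[ℝ] E} (h : ker T = ⊥) : detPos T = LinearMap.det T := by
  have hP : (ker T).orthogonalProjectionOnto = 0 := by
    rw [h]; exact Subsingleton.elim _ _
  simp [detPos, hP]

lemma detPos_smul_id {E : Type} [NormedAddCommGroup E] [InnerProductSpace ℝ E]
    [FiniteDimensional ℝ E] {s : ℝ} (hs : s ≠ 0) :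
    detPos (s • LinearMap.id : E →ₗ[ℝ] E) = s ^ finrank ℝ E := by
  rw [detPos_eq_det_of_ker_eq_bot (by rw [ker_smul _ _ hs, ker_id]), LinearMap.det_smul,
    LinearMap.det_id, mul_one]

lemma torsion_two (C : ℕ → Type) [∀ n, NormedAddCommGroup (C n)]
    [∀ n, InnerProductSpace ℝ (C n)] [∀ n, FiniteDimensional ℝ (C n)]
    (d : ∀ n, C n →ₗ[ℝ] C (n - 1)) :
    torsion C d 2
      = detPos (hodgeLaplace C d 1) ^ (1 / 2 : ℝ) * (detPos (hodgeLaplace C d 2))⁻¹ := by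
  norm_num [torsion, Finset.prod_range_succ, Real.rpow_neg_one]

lemma adjoint_comp_add_comp_adjoint_toEuclideanLin {𝕜 : Type*} [RCLike 𝕜] {l m n : Type*}
    [Fintype l] [DecidableEq l] [Fintype m] [DecidableEq m] [Fintype n] [DecidableEq n]
    (A : Matrix m n 𝕜) (B : Matrix n l 𝕜) :
    adjoint (toEuclideanLin A) ∘ₗ toEuclideanLin A
        + toEuclideanLin B ∘ₗ adjoint (toEuclideanLin B)
      = toEuclideanLin (Aᴴ * A + B * Bᴴ) := by
  simp [← toEuclideanLin_conjTranspose_eq_adjoint]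

section TriangleMatrices

variable {R : Type*} [CommRing R]

/- The matrices of `∂₁` and `∂₂` in the orthonormal bases of `triBoundary`, with
`a, b, c` standing for the vertex weights `f i / g i`. -/
def triangleBoundaryMatrix₁ (a b c : R) : Matrix (Fin 3) (Fin 3) R :=
  !![-b, 0, -c; a, -c, 0; 0, b, a]

def triangleBoundaryMatrix₂ (a b c : R) : Matrix (Fin 3) (Fin 1) R := !![c; a; -b]

lemma triangleBoundaryMatrix₁_gram (a b c : R) :
    (triangleBoundaryMatrix₁ a b c)ᵀ * triangleBoundaryMatrix₁ a b c
        + triangleBoundaryMatrix₂ a b c * (triangleBoundaryMatrix₂ a b c)ᵀ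
      = (a ^ 2 + b ^ 2 + c ^ 2) • 1 := by
  ext i j
  fin_cases i <;> fin_cases j <;>
    simp [triangleBoundaryMatrix₁, triangleBoundaryMatrix₂, Matrix.mul_apply, Fin.sum_univ_three,
      vecMul, dotProduct] <;> ring

lemma triangleBoundaryMatrix₂_gram (a b c : R) :
    (triangleBoundaryMatrix₂ a b c)ᵀ * triangleBoundaryMatrix₂ a b c
      = (a ^ 2 + b ^ 2 + c ^ 2) • 1 := by
  ext i j
  fin_cases i; fin_cases j
  simp [triangleBoundaryMatrix₂, Matrix.mul_apply, Fin.sum_univ_three]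
  ring

end TriangleMatrices

lemma adjoint_comp_add_comp_adjoint_triangleBoundaryMatrix (a b c : ℝ) :
    adjoint (toEuclideanLin (triangleBoundaryMatrix₁ a b c))
          ∘ₗ toEuclideanLin (triangleBoundaryMatrix₁ a b c)
        + toEuclideanLin (triangleBoundaryMatrix₂ a b c)
          ∘ₗ adjoint (toEuclideanLin (triangleBoundaryMatrix₂ a b c))
      = (a ^ 2 + b ^ 2 + c ^ 2) • LinearMap.id := by
  rw [adjoint_comp_add_comp_adjoint_toEuclideanLin, conjTranspose_eq_transpose_of_trivial,
    conjTranspose_eq_transpose_of_trivial, triangleBoundaryMatrix₁_gram]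
  simp

lemma adjoint_comp_triangleBoundaryMatrix₂ (a b c : ℝ) :
    adjoint (toEuclideanLin (triangleBoundaryMatrix₂ a b c))
        ∘ₗ toEuclideanLin (triangleBoundaryMatrix₂ a b c)
      = (a ^ 2 + b ^ 2 + c ^ 2) • LinearMap.id := by
  rw [← toEuclideanLin_conjTranspose_eq_adjoint, ← toLpLin_mul_same,
    conjTranspose_eq_transpose_of_trivial, triangleBoundaryMatrix₂_gram]
  simp

lemma sum_sq_div_sq_fin_three (f g : Fin 3 → ℝ) :
    ∑ i, f i ^ 2 / g i ^ 2 = (f 0 / g 0) ^ 2 + (f 1 / g 1) ^ 2 + (f 2 / g 2) ^ 2 := by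
  simp [Fin.sum_univ_three, div_pow]

lemma hodgeLaplace_triBoundary_one (f g : Fin 3 → ℝ) :
    hodgeLaplace (fun n => EuclideanSpace ℝ (Fin (triDims n))) (triBoundary f g) 1
      = (∑ i, f i ^ 2 / g i ^ 2) • LinearMap.id := by
  rw [sum_sq_div_sq_fin_three]
  exact adjoint_comp_add_comp_adjoint_triangleBoundaryMatrix _ _ _

lemma hodgeLaplace_triBoundary_two (f g : Fin 3 → ℝ) :
    hodgeLaplace (fun n => EuclideanSpace ℝ (Fin (triDims n))) (triBoundary f g) 2
      = (∑ i, f i ^ 2 / g i ^ 2) • LinearMap.id := by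
  rw [sum_sq_div_sq_fin_three, hodgeLaplace, show triBoundary f g 3 = 0 from rfl, zero_comp,
    add_zero]
  exact adjoint_comp_triangleBoundaryMatrix₂ _ _ _

lemma torsion_triBoundary (f g : Fin 3 → ℝ) (h : ∑ i, f i ^ 2 / g i ^ 2 ≠ 0) :
    torsion (fun n => EuclideanSpace ℝ (Fin (triDims n))) (triBoundary f g) 2
      = Real.sqrt (∑ i, f i ^ 2 / g i ^ 2) := by
  set s := ∑ i, f i ^ 2 / g i ^ 2
  have hs : 0 < s := lt_of_le_of_ne (by positivity) h.symm
  rw [torsion_two, hodgeLaplace_triBoundary_one, hodgeLaplace_triBoundary_two,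
    detPos_smul_id h, detPos_smul_id h]
  change (s ^ finrank ℝ (EuclideanSpace ℝ (Fin 3))) ^ (1 / 2 : ℝ)
    * (s ^ finrank ℝ (EuclideanSpace ℝ (Fin 1)))⁻¹ = _
  rw [finrank_euclideanSpace_fin, finrank_euclideanSpace_fin, ← Real.sqrt_eq_rpow,
    pow_succ, Real.sqrt_mul' _ hs.le, Real.sqrt_sq hs.le, pow_one]
  field_simp

/-- the `(f,g)`-weighted torsion of the triangle digraph equals
`√(∑ᵢ f(i)²/g(i)²)`; in particular the `(f,f)`-weighted torsion is `√3`. -/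
theorem stmt16 (f g : Fin 3 → ℝ) (hf : ∀ v, f v ≠ 0) (hg : ∀ v, g v ≠ 0) :
    torsion (fun n => EuclideanSpace ℝ (Fin (triDims n))) (triBoundary f g) 2
      = Real.sqrt (∑ i, f i ^ 2 / g i ^ 2) ∧
    torsion (fun n => EuclideanSpace ℝ (Fin (triDims n))) (triBoundary f f) 2
      = Real.sqrt 3 := by
  have hpos : 0 < ∑ i, f i ^ 2 / g i ^ 2 := by
    have := hf 0; have := hg 0
    exact Finset.sum_pos' (fun i _ => by positivity) ⟨0, Finset.mem_univ _, by positivity⟩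
  have hself : ∑ i, f i ^ 2 / f i ^ 2 = 3 := by simp [hf]
  refine ⟨torsion_triBoundary f g hpos.ne', ?_⟩
  rw [torsion_triBoundary f f (by norm_num [hself]), hself]
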